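/- arXiv:0806.1405 — 3 statements merged into one kernel-verified Lean document; each statement's English description precedes it below -/
import Mathlib

section
/- Let u be a linear functional on polynomials satisfying the distributional Pearson equation (φ u)' = ψ u, and let u_k := φ^k u. Then for every k ≥ 1, the functional u_k satisfies (φ u_k)' = (ψ + k φ') u_k. -/
open Polynomial

/-- Distributional derivative of a linear functional: `⟨u', p⟩ = -⟨u, p'⟩`. -/
noncomputable def fD (u : Polynomial ℝ →ₗ[ℝ] ℝ) : Polynomial ℝ →ₗ[ℝ] ℝ :=
  -(u ∘ₗ (derivative : Polynomial ℝ →ₗ[ℝ] Polynomial ℝ))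

/-- Multiplication of a functional by a polynomial: `⟨Q u, p⟩ = ⟨u, Q p⟩`. -/
noncomputable def pmul (Q : Polynomial ℝ) (u : Polynomial ℝ →ₗ[ℝ] ℝ) :
    Polynomial ℝ →ₗ[ℝ] ℝ :=
  u ∘ₗ (LinearMap.mulLeft ℝ Q)

/-! Since `pmul` and `fD` are the transposes of multiplication and of `-derivative`, the Leibniz
rule for functionals is the Leibniz rule for polynomials read backwards. Writing `φ^k u` as
`φ^k (φ u)` and applying it with the Pearson equation gives
`(φ^(k+1) u)' = (φ^k)' φ u + φ^k ψ u = (ψ + k φ') φ^k u`. -/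

section FunctionalCalculus

variable (P Q : Polynomial ℝ) (u : Polynomial ℝ →ₗ[ℝ] ℝ)

@[simp]
theorem pmul_apply (p : Polynomial ℝ) : pmul Q u p = u (Q * p) := rfl

@[simp]
theorem fD_apply (p : Polynomial ℝ) : fD u p = -u (derivative p) := rfl

theorem pmul_pmul : pmul P (pmul Q u) = pmul (Q * P) u := by
  ext p
  simp [mul_assoc]

theorem pmul_add_left : pmul (P + Q) u = pmul P u + pmul Q u := by
  ext p
  simp [add_mul]

theorem fD_pmul : fD (pmul Q u) = pmul (derivative Q) u + pmul Q (fD u) := by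
  ext p
  simp [derivative_mul]

end FunctionalCalculus

theorem mul_derivative_pow (φ : Polynomial ℝ) (k : ℕ) :
    φ * derivative (φ ^ k) = C (k : ℝ) * derivative φ * φ ^ k := by
  cases k with
  | zero => simp
  | succ m =>
    rw [derivative_pow_succ]
    push_cast
    ring

theorem stmt_3_general (φ ψ : Polynomial ℝ)
    (u : Polynomial ℝ →ₗ[ℝ] ℝ)
    (hPearson : fD (pmul φ u) = pmul ψ u)
    (k : ℕ) :
    fD (pmul φ (pmul (φ ^ k) u)) = pmul (ψ + C (k : ℝ) * derivative φ) (pmul (φ ^ k) u) := by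
  calc fD (pmul φ (pmul (φ ^ k) u))
      = fD (pmul (φ ^ k) (pmul φ u)) := by rw [pmul_pmul, pmul_pmul, mul_comm]
    _ = pmul (derivative (φ ^ k)) (pmul φ u) + pmul (φ ^ k) (pmul ψ u) := by
      rw [fD_pmul, hPearson]
    _ = pmul (ψ + C (k : ℝ) * derivative φ) (pmul (φ ^ k) u) := by
      rw [pmul_pmul, pmul_pmul, pmul_pmul, mul_derivative_pow, ← pmul_add_left]
      congr 1
      ring

/-- if `(φ u)' = ψ u` then `u_k = φ^k u` satisfies
`(φ u_k)' = (ψ + k φ') u_k` for every `k ≥ 1`. -/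
theorem stmt_3 (φ ψ : Polynomial ℝ) (hφ : φ.natDegree ≤ 2) (hψ : ψ.degree = 1)
    (u : Polynomial ℝ →ₗ[ℝ] ℝ)
    (hPearson : fD (pmul φ u) = pmul ψ u)
    (k : ℕ) (hk : 1 ≤ k) :
    fD (pmul φ (pmul (φ ^ k) u)) = pmul (ψ + C (k : ℝ) * derivative φ) (pmul (φ ^ k) u) :=
  stmt_3_general φ ψ u hPearson k
end

section
/- Under the same hypotheses, for 0 ≤ μ ≤ ν ≤ n, the identity 𝒫_ν(·;n) u_{n-ν} = d^{ν-μ}/dx^{ν-μ} [𝒫_μ(·;n) u_{n-μ}] holds. -/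
open Polynomial

/-- The complementary polynomials: `𝒫₀ = 1`,
`𝒫_{ν+1} = φ 𝒫_ν' + (ψ + (n-ν-1) φ') 𝒫_ν`. -/
noncomputable def compP (φ ψ : Polynomial ℝ) (n : ℕ) : ℕ → Polynomial ℝ
  | 0 => 1
  | ν + 1 => φ * derivative (compP φ ψ n ν)
      + (ψ + C ((n : ℝ) - ν - 1) * derivative φ) * compP φ ψ n ν

/-! The Pearson equation `(φ u)' = ψ u` gives `(Q φ u)' = (φ Q' + ψ Q) u` for every polynomial `Q`;
with `Q = 𝒫_ν φ^(n-ν-1)` this is exactly the recursion `(𝒫_ν u_{n-ν})' = 𝒫_{ν+1} u_{n-ν-1}`,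
and the identity follows by induction on `ν` starting from `ν = μ`. -/

theorem Polynomial.mul_derivative_pow {R : Type*} [CommSemiring R] (p : R[X]) (k : ℕ) :
    p * derivative (p ^ k) = C (k : R) * derivative p * p ^ k := by
  cases k with
  | zero => simp
  | succ k => rw [derivative_pow_succ, pow_succ]; push_cast; ring

lemma pmul_pmul_s7 (A B : ℝ[X]) (u : ℝ[X] →ₗ[ℝ] ℝ) : pmul A (pmul B u) = pmul (A * B) u :=
  LinearMap.ext fun p => congrArg u (show B * (A * p) = A * B * p by ring)

section Pearson

variable {φ ψ : ℝ[X]} {u : ℝ[X] →ₗ[ℝ] ℝ}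

lemma fD_pmul_mul_of_pearson (hPearson : fD (pmul φ u) = pmul ψ u) (Q : ℝ[X]) :
    fD (pmul (Q * φ) u) = pmul (φ * derivative Q + ψ * Q) u := by
  have hP (q : ℝ[X]) : -u (φ * derivative q) = u (ψ * q) := LinearMap.congr_fun hPearson q
  refine LinearMap.ext fun p => ?_
  show -u (Q * φ * derivative p) = u ((φ * derivative Q + ψ * Q) * p)
  have hLeibniz : Q * φ * derivative p = φ * derivative (Q * p) - φ * derivative Q * p := by
    rw [derivative_mul]; ring
  rw [hLeibniz, map_sub, ← neg_neg (u (φ * derivative (Q * p))), hP, add_mul, map_add, mul_assoc ψ]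
  ring

lemma fD_pmul_mul_pow_succ_of_pearson (hPearson : fD (pmul φ u) = pmul ψ u) (Q : ℝ[X]) (k : ℕ) :
    fD (pmul (Q * φ ^ (k + 1)) u)
      = pmul ((φ * derivative Q + (ψ + C (k : ℝ) * derivative φ) * Q) * φ ^ k) u := by
  rw [pow_succ, ← mul_assoc, fD_pmul_mul_of_pearson hPearson, derivative_mul,
    mul_add, mul_left_comm φ Q, mul_derivative_pow]
  congr 1; ring

lemma fD_pmul_compP_of_pearson (hPearson : fD (pmul φ u) = pmul ψ u) {n ν : ℕ} (hν : ν < n) :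
    fD (pmul (compP φ ψ n ν) (pmul (φ ^ (n - ν)) u))
      = pmul (compP φ ψ n (ν + 1)) (pmul (φ ^ (n - (ν + 1))) u) := by
  obtain ⟨k, rfl⟩ : ∃ k, n = ν + 1 + k := ⟨n - (ν + 1), by omega⟩
  have hcoeff : ((ν + 1 + k : ℕ) : ℝ) - ν - 1 = k := by push_cast; ring
  rw [show ν + 1 + k - ν = k + 1 by omega, show ν + 1 + k - (ν + 1) = k by omega,
    pmul_pmul_s7, pmul_pmul_s7, fD_pmul_mul_pow_succ_of_pearson hPearson, compP, hcoeff]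

end Pearson

theorem stmt_7_general (φ ψ : Polynomial ℝ)
    (u : Polynomial ℝ →ₗ[ℝ] ℝ)
    (hPearson : fD (pmul φ u) = pmul ψ u)
    (n ν μ : ℕ) (hμν : μ ≤ ν) (hν : ν ≤ n) :
    pmul (compP φ ψ n ν) (pmul (φ ^ (n - ν)) u)
      = fD^[ν - μ] (pmul (compP φ ψ n μ) (pmul (φ ^ (n - μ)) u)) := by
  induction ν, hμν using Nat.le_induction with
  | base => simp
  | succ ν hμν ih =>
    rw [Nat.succ_sub hμν, Function.iterate_succ_apply', ← ih (by omega),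
      fD_pmul_compP_of_pearson hPearson (by omega)]

/-- for `0 ≤ μ ≤ ν ≤ n`,
`𝒫_ν(·;n) u_{n-ν} = d^{ν-μ}/dx^{ν-μ} [𝒫_μ(·;n) u_{n-μ}]`. -/
theorem stmt_7 (φ ψ : Polynomial ℝ) (hφ : φ.natDegree ≤ 2) (hψ : ψ.degree = 1)
    (u : Polynomial ℝ →ₗ[ℝ] ℝ)
    (hPearson : fD (pmul φ u) = pmul ψ u)
    (n ν μ : ℕ) (hμν : μ ≤ ν) (hν : ν ≤ n) :
    pmul (compP φ ψ n ν) (pmul (φ ^ (n - ν)) u)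
      = fD^[ν - μ] (pmul (compP φ ψ n μ) (pmul (φ ^ (n - μ)) u)) :=
  stmt_7_general φ ψ u hPearson n ν μ hμν hν
end

section
/- Each 𝒫_ν(·;n) satisfies the second-order hypergeometric-type differential equation φ 𝒫_ν'' + ((n-ν) φ' + ψ) 𝒫_ν' = -μ_{n,ν} 𝒫_ν, where μ_{n,ν} = -ν ((n - (ν+1)/2) φ'' + ψ'), with φ'' and ψ' the (constant) second and first derivatives of φ and ψ. -/
open Polynomial

/-
Differentiating the recursion gives `𝒫_{ν+1}' = (λ_ν + ψ' + (n-ν-1) φ'') 𝒫_ν` as soon as `𝒫_ν` solves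
the equation with eigenvalue `λ_ν`, because `φ''` and `ψ'` are constants. Feeding this back into the
recursion shows that `𝒫_{ν+1}` solves the equation of index `ν+1` with eigenvalue
`λ_{ν+1} = λ_ν + ψ' + (n-ν-1) φ''`, and summing these increments gives `λ_ν = -μ_{n,ν}`.
-/

section Derivative

variable {R : Type*} [CommRing R]

theorem derivative_eq_C_eval_zero_of_natDegree_le_one {p : R[X]} (hp : p.natDegree ≤ 1) :
    derivative p = C ((derivative p).eval 0) := by
  rw [← coeff_zero_eq_eval_zero]
  exact eq_C_of_natDegree_le_zero ((natDegree_derivative_le p).trans (by omega))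

theorem derivative_derivative_eq_C_eval_zero_of_natDegree_le_two {p : R[X]}
    (hp : p.natDegree ≤ 2) :
    derivative (derivative p) = C ((derivative (derivative p)).eval 0) :=
  derivative_eq_C_eval_zero_of_natDegree_le_one ((natDegree_derivative_le p).trans (by omega))

noncomputable def hypergeometricOperator (φ ψ : R[X]) (κ : R) (P : R[X]) : R[X] :=
  φ * derivative (derivative P) + (C κ * derivative φ + ψ) * derivative P

theorem derivative_recursion_step {φ ψ : R[X]} {a b : R}
    (ha : derivative (derivative φ) = C a) (hb : derivative ψ = C b) (c : R) (P : R[X]) :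
    derivative (φ * derivative P + (ψ + C c * derivative φ) * P)
      = hypergeometricOperator φ ψ (c + 1) P + C (b + c * a) * P := by
  simp only [hypergeometricOperator, derivative_mul, derivative_C, ha, hb,
    map_add, map_mul, map_one]
  ring

end Derivative

section Recursion

variable {φ ψ : ℝ[X]} {a b : ℝ}

/-- The eigenvalue `λ_ν = -μ_{n,ν}`, with `a = φ''` and `b = ψ'`. -/
noncomputable def eigenvalue (a b : ℝ) (n ν : ℕ) : ℝ :=
  ν * (((n : ℝ) - ((ν : ℝ) + 1) / 2) * a + b)

theorem eigenvalue_succ (n ν : ℕ) :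
    eigenvalue a b n (ν + 1) = eigenvalue a b n ν + b + ((n : ℝ) - ν - 1) * a := by
  simp only [eigenvalue]
  push_cast
  ring

theorem hypergeometricOperator_compP (ha : derivative (derivative φ) = C a)
    (hb : derivative ψ = C b) (n ν : ℕ) :
    hypergeometricOperator φ ψ ((n : ℝ) - ν) (compP φ ψ n ν)
      = C (eigenvalue a b n ν) * compP φ ψ n ν := by
  induction ν with
  | zero => simp [hypergeometricOperator, compP, eigenvalue]
  | succ ν ih =>
    have hderiv : derivative (compP φ ψ n (ν + 1))
        = C (eigenvalue a b n (ν + 1)) * compP φ ψ n ν := by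
      rw [compP, derivative_recursion_step ha hb, sub_add_cancel, ih, eigenvalue_succ]
      simp only [map_add, map_mul]
      ring
    rw [hypergeometricOperator, hderiv, derivative_C_mul, compP, Nat.cast_succ, ← sub_sub]
    ring

end Recursion

theorem stmt_8_general (φ ψ : Polynomial ℝ) (hφ : φ.natDegree ≤ 2) (hψ : ψ.degree = 1)
    (n ν : ℕ) :
    φ * derivative (derivative (compP φ ψ n ν))
      + (C ((n : ℝ) - ν) * derivative φ + ψ) * derivative (compP φ ψ n ν)
      = C (-(-(ν : ℝ) * (((n : ℝ) - ((ν : ℝ) + 1) / 2) * (derivative (derivative φ)).eval 0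
              + (derivative ψ).eval 0))) * compP φ ψ n ν := by
  have ha := derivative_derivative_eq_C_eval_zero_of_natDegree_le_two hφ
  have hb := derivative_eq_C_eval_zero_of_natDegree_le_one
    (natDegree_eq_of_degree_eq_some hψ).le
  rw [neg_mul, neg_neg]
  exact hypergeometricOperator_compP ha hb n ν

/-- `𝒫_ν(·;n)` satisfies the second-order hypergeometric-type equation
`φ 𝒫_ν'' + ((n-ν) φ' + ψ) 𝒫_ν' = -μ_{n,ν} 𝒫_ν` with
`μ_{n,ν} = -ν ((n - (ν+1)/2) φ'' + ψ')`, `φ''`, `ψ'` being constants. -/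
theorem stmt_8 (φ ψ : Polynomial ℝ) (hφ : φ.natDegree ≤ 2) (hψ : ψ.degree = 1)
    (n ν : ℕ) (hν : ν ≤ n) :
    φ * derivative (derivative (compP φ ψ n ν))
      + (C ((n : ℝ) - ν) * derivative φ + ψ) * derivative (compP φ ψ n ν)
      = C (-(-(ν : ℝ) * (((n : ℝ) - ((ν : ℝ) + 1) / 2) * (derivative (derivative φ)).eval 0
              + (derivative ψ).eval 0))) * compP φ ψ n ν :=
  stmt_8_general φ ψ hφ hψ n ν
end
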